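/- For every natural number n there exist polynomials P and Q with integer coefficients, each of degree at most ⌈n/2⌉, such that for every real number r, r · R_n(r) = P(r^2) · r · sin r + Q(r^2) · cos r. -/

import Mathlib

open MeasureTheory intervalIntegral Polynomial

/-- Hermite's integral `R_n(r) = ∫_0^r ((r² - x²)ⁿ / (2ⁿ n!)) cos x dx`. -/
noncomputable def R (n : ℕ) (r : ℝ) : ℝ :=
  ∫ x in (0:ℝ)..r, ((r ^ 2 - x ^ 2) ^ n / (2 ^ n * n.factorial)) * Real.cos x

/-!
With the weight `w_n(x) = (r² - x²)ⁿ / (2ⁿ n!)` one has `w_{n+1}' = -x w_n` and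
`x² w_n = r² w_n - 2(n+1) w_{n+1}`. Integrating `w_{n+2} cos` by parts twice (the boundary
terms vanish since `w_{n+1}(r) = 0`) gives the three-term recurrence
`R_{n+2} = (2n+3) R_{n+1} - r² R_n`, with `R_0 = sin r` and `R_1 = sin r - r cos r`.
Hence `r R_n(r)` is `P_n(r²) r sin r + Q_n(r²) cos r` for the integer polynomial sequences
satisfying `p_{n+2} = (2n+3) p_{n+1} - X p_n`, and that recurrence raises the degree by one
every second step.
-/

noncomputable section

def hermiteWeight (n : ℕ) (r x : ℝ) : ℝ :=
  (r ^ 2 - x ^ 2) ^ n / (2 ^ n * n.factorial)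

lemma R_eq_integral (n : ℕ) (r : ℝ) :
    R n r = ∫ x in (0:ℝ)..r, hermiteWeight n r x * Real.cos x :=
  rfl

@[simp]
lemma hermiteWeight_zero (r x : ℝ) : hermiteWeight 0 r x = 1 := by
  simp [hermiteWeight]

@[simp]
lemma hermiteWeight_succ_self (n : ℕ) (r : ℝ) : hermiteWeight (n + 1) r r = 0 := by
  simp [hermiteWeight]

@[fun_prop]
lemma continuous_hermiteWeight (n : ℕ) (r : ℝ) : Continuous (hermiteWeight n r) := by
  unfold hermiteWeight
  fun_prop

lemma hasDerivAt_hermiteWeight_succ (n : ℕ) (r x : ℝ) :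
    HasDerivAt (hermiteWeight (n + 1) r) (-x * hermiteWeight n r x) x := by
  have h := (((hasDerivAt_pow 2 x).const_sub (r ^ 2)).pow (n + 1)).div_const
    (2 ^ (n + 1) * ((n + 1).factorial : ℝ))
  refine h.congr_deriv ?_
  simp only [hermiteWeight, Nat.factorial_succ]
  push_cast
  field_simp
  ring

lemma sq_mul_hermiteWeight (n : ℕ) (r x : ℝ) :
    x ^ 2 * hermiteWeight n r x =
      r ^ 2 * hermiteWeight n r x - 2 * (n + 1) * hermiteWeight (n + 1) r x := by
  simp only [hermiteWeight, Nat.factorial_succ]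
  push_cast
  field_simp
  ring

lemma hasDerivAt_hermite_antideriv (n : ℕ) (r x : ℝ) :
    HasDerivAt
      (fun x => hermiteWeight (n + 2) r x * Real.sin x - x * hermiteWeight (n + 1) r x * Real.cos x)
      (hermiteWeight (n + 2) r x * Real.cos x
        - (2 * n + 3) * (hermiteWeight (n + 1) r x * Real.cos x)
        + r ^ 2 * (hermiteWeight n r x * Real.cos x)) x := by
  have h := ((hasDerivAt_hermiteWeight_succ (n + 1) r x).mul (Real.hasDerivAt_sin x)).sub
    (((hasDerivAt_id x).mul (hasDerivAt_hermiteWeight_succ n r x)).mul (Real.hasDerivAt_cos x))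
  refine h.congr_deriv ?_
  have hsq := sq_mul_hermiteWeight n r x
  simp only [Pi.mul_apply, id_eq]
  linear_combination Real.cos x * hsq

theorem R_add_two (n : ℕ) (r : ℝ) :
    R (n + 2) r = (2 * n + 3) * R (n + 1) r - r ^ 2 * R n r := by
  have hint : ∀ k, IntervalIntegrable (fun x => hermiteWeight k r x * Real.cos x) volume 0 r :=
    fun k => by apply Continuous.intervalIntegrable; fun_prop
  have hftc := integral_eq_sub_of_hasDerivAt (fun x _ => hasDerivAt_hermite_antideriv n r x)
    (Continuous.intervalIntegrable (by fun_prop) 0 r)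
  rw [integral_add ((hint _).sub ((hint _).const_mul _)) ((hint _).const_mul _),
    integral_sub (hint _) ((hint _).const_mul _), intervalIntegral.integral_const_mul,
    intervalIntegral.integral_const_mul] at hftc
  simp only [hermiteWeight_succ_self, zero_mul, mul_zero, Real.sin_zero, sub_zero] at hftc
  simp only [R_eq_integral]
  linarith

theorem R_zero (r : ℝ) : R 0 r = Real.sin r := by
  simp [R_eq_integral]

theorem R_one (r : ℝ) : R 1 r = Real.sin r - r * Real.cos r := by
  have h : ∀ x, HasDerivAt (fun x => hermiteWeight 1 r x * Real.sin x - x * Real.cos x + Real.sin x)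
      (hermiteWeight 1 r x * Real.cos x) x := fun x =>
    ((((hasDerivAt_hermiteWeight_succ 0 r x).mul (Real.hasDerivAt_sin x)).sub
      ((hasDerivAt_id x).mul (Real.hasDerivAt_cos x))).add (Real.hasDerivAt_sin x)).congr_deriv
      (by simp only [hermiteWeight_zero, id_eq]; ring)
  rw [R_eq_integral, integral_eq_sub_of_hasDerivAt (fun x _ => h x)
    (by apply Continuous.intervalIntegrable; fun_prop)]
  simp only [hermiteWeight_succ_self, Real.sin_zero, Real.cos_zero]
  ring

def hermiteSeq (a b : ℤ[X]) : ℕ → ℤ[X]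
  | 0 => a
  | 1 => b
  | n + 2 => C (2 * n + 3 : ℤ) * hermiteSeq a b (n + 1) - X * hermiteSeq a b n

theorem natDegree_hermiteSeq_le {a b : ℤ[X]} (ha : a.natDegree = 0) (hb : b.natDegree ≤ 1) :
    ∀ n, (hermiteSeq a b n).natDegree ≤ (n + 1) / 2
  | 0 => by simp [hermiteSeq, ha]
  | 1 => by simpa [hermiteSeq] using hb
  | n + 2 => by
    have h₀ := natDegree_hermiteSeq_le ha hb n
    have h₁ := natDegree_hermiteSeq_le ha hb (n + 1)
    refine (natDegree_sub_le _ _).trans (max_le ?_ ?_)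
    · exact (natDegree_C_mul_le _ _).trans (h₁.trans (by omega))
    · exact natDegree_mul_le.trans (by rw [natDegree_X]; omega)

end

theorem R_polynomial_form (n : ℕ) :
    ∃ P Q : Polynomial ℤ, P.natDegree ≤ (n + 1) / 2 ∧ Q.natDegree ≤ (n + 1) / 2 ∧
      ∀ r : ℝ, r * R n r =
        (Polynomial.aeval (r ^ 2) P) * (r * Real.sin r) +
        (Polynomial.aeval (r ^ 2) Q) * Real.cos r := by
  refine ⟨hermiteSeq 1 1 n, hermiteSeq 0 (-X) n, natDegree_hermiteSeq_le (by simp) (by simp) n,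
    natDegree_hermiteSeq_le (by simp) (by simp) n, fun r => ?_⟩
  induction n using Nat.twoStepInduction with
  | zero => simp [hermiteSeq, R_zero]
  | one => simp only [R_one, hermiteSeq, map_one, aeval_neg, aeval_X]; ring
  | more n ih₀ ih₁ =>
    have hrec : r * R (n + 2) r = (2 * n + 3) * (r * R (n + 1) r) - r ^ 2 * (r * R n r) := by
      rw [R_add_two]; ring
    rw [hrec, ih₀, ih₁]
    simp only [hermiteSeq, map_sub, map_mul, aeval_C, aeval_X]
    simp only [algebraMap_int_eq, eq_intCast]
    push_cast
    ring
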